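/- arXiv:1011.5792 — 6 statements merged into one kernel-verified Lean document; each statement's English description precedes it below -/
import Mathlib

section
/- Under the unconditional fixed-point hypotheses, for each g ∈ ℝ the function f^g : [0, π] → ℝ defined by f^g(a) = a − E^Q[α₁(g − c(a) + ε)] is continuous, strictly increasing, and satisfies f^g(0) ≤ 0 and f^g(π) ≥ 0. -/
open MeasureTheory

/-- Under the unconditional fixed-point hypotheses, for each `g ∈ ℝ` the
function `f^g : [0, π] → ℝ`, `f^g a = a − E^Q[α₁ (g − c a + ε)]`, is continuous, strictly
increasing, and satisfies `f^g 0 ≤ 0` and `f^g π ≥ 0`. -/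
theorem fg_continuous_strictMono_sign
    {Ω : Type*} [MeasurableSpace Ω] (Q : Measure Ω) [IsProbabilityMeasure Q]
    (π : ℝ) (hπ : 0 < π)
    (c : ℝ → ℝ) (hc_mono : Monotone c) (hc_cont : Continuous c)
    (α₁ : ℝ → Ω → ℝ)
    (hα₁_meas : Measurable (Function.uncurry α₁))
    (hα₁_mem : ∀ g ω, α₁ g ω ∈ Set.Icc 0 π)
    (hα₁_mono : ∀ᵐ ω ∂Q, Monotone fun g => α₁ g ω)
    (ε : Ω → ℝ) (hε : Measurable ε)
    (hcont : Continuous fun x => ∫ ω, α₁ (x + ε ω) ω ∂Q)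
    (g : ℝ) :
    ContinuousOn (fun a => a - ∫ ω, α₁ (g - c a + ε ω) ω ∂Q) (Set.Icc 0 π) ∧
    StrictMonoOn (fun a => a - ∫ ω, α₁ (g - c a + ε ω) ω ∂Q) (Set.Icc 0 π) ∧
    (0 : ℝ) - ∫ ω, α₁ (g - c 0 + ε ω) ω ∂Q ≤ 0 ∧
    0 ≤ π - ∫ ω, α₁ (g - c π + ε ω) ω ∂Q := by
  have key_meas : ∀ x : ℝ, Measurable fun ω => α₁ (x + ε ω) ω := fun x =>
    hα₁_meas.comp ((measurable_const.add hε).prodMk measurable_id)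
  have key_int : ∀ x : ℝ, Integrable (fun ω => α₁ (x + ε ω) ω) Q := by
    intro x
    refine (integrable_const π).mono' (key_meas x).aestronglyMeasurable ?_
    filter_upwards with ω
    have h := hα₁_mem (x + ε ω) ω
    rw [Real.norm_eq_abs, abs_le]
    exact ⟨by linarith [h.1], h.2⟩
  set I : ℝ → ℝ := fun x => ∫ ω, α₁ (x + ε ω) ω ∂Q with hI
  have hImono : Monotone I := by
    intro x y hxy
    refine integral_mono_ae (key_int x) (key_int y) ?_
    filter_upwards [hα₁_mono] with ω hω
    exact hω (by linarith)
  have hIbnd : ∀ x : ℝ, I x ∈ Set.Icc 0 π := by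
    intro x
    constructor
    · have : (0 : ℝ) = ∫ _ : Ω, (0 : ℝ) ∂Q := by simp
      rw [this]
      exact integral_mono (integrable_const 0) (key_int x)
        (fun ω => (hα₁_mem _ ω).1)
    · have : (π : ℝ) = ∫ _ : Ω, (π : ℝ) ∂Q := by simp
      rw [this]
      exact integral_mono (key_int x) (integrable_const π)
        (fun ω => (hα₁_mem _ ω).2)
  refine ⟨?_, ?_, ?_, ?_⟩
  · exact (continuous_id.sub (hcont.comp (continuous_const.sub hc_cont))).continuousOn
  · intro a _ b _ hab
    have h1 : I (g - c b) ≤ I (g - c a) := hImono (by linarith [hc_mono hab.le])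
    simp only
    linarith
  · linarith [(hIbnd (g - c 0)).1]
  · linarith [(hIbnd (g - c π)).2]
end

section
/- (Lemma 1(i)) Under the unconditional fixed-point hypotheses, for each g ∈ ℝ there exists a unique α₀(g) ∈ [0, π] such that f^g(α₀(g)) = 0, where f^g(a) = a − E^Q[α₁(g − c(a) + ε)] for a ∈ [0, π]. -/
open MeasureTheory

/-- **Lemma 1(i).** Under the unconditional fixed-point hypotheses, for each
`g ∈ ℝ` there exists a unique `α₀ g ∈ [0, π]` such that `f^g (α₀ g) = 0`, where
`f^g a = a − E^Q[α₁ (g − c a + ε)]` for `a ∈ [0, π]`. -/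
theorem exists_unique_fixed_point_root
    {Ω : Type*} [MeasurableSpace Ω] (Q : Measure Ω) [IsProbabilityMeasure Q]
    (π : ℝ) (hπ : 0 < π)
    (c : ℝ → ℝ) (hc_mono : Monotone c) (hc_cont : Continuous c)
    (α₁ : ℝ → Ω → ℝ)
    (hα₁_meas : Measurable (Function.uncurry α₁))
    (hα₁_mem : ∀ g ω, α₁ g ω ∈ Set.Icc 0 π)
    (hα₁_mono : ∀ᵐ ω ∂Q, Monotone fun g => α₁ g ω)
    (ε : Ω → ℝ) (hε : Measurable ε)
    (hcont : Continuous fun x => ∫ ω, α₁ (x + ε ω) ω ∂Q)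
    (g : ℝ) :
    ∃! a : ℝ, a ∈ Set.Icc 0 π ∧ a - ∫ ω, α₁ (g - c a + ε ω) ω ∂Q = 0 := by
  set F : ℝ → ℝ := fun x => ∫ ω, α₁ (x + ε ω) ω ∂Q with hF
  -- integrability
  have hmeas : ∀ x : ℝ, Measurable fun ω => α₁ (x + ε ω) ω := by
    intro x
    have : (fun ω => α₁ (x + ε ω) ω) =
        (Function.uncurry α₁) ∘ (fun ω => (x + ε ω, ω)) := rfl
    rw [this]
    exact hα₁_meas.comp ((measurable_const.add hε).prodMk measurable_id)
  have hint : ∀ x : ℝ, Integrable (fun ω => α₁ (x + ε ω) ω) Q := by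
    intro x
    refine (integrable_const π).mono' (hmeas x).aestronglyMeasurable ?_
    filter_upwards with ω
    have h := hα₁_mem (x + ε ω) ω
    rw [Real.norm_eq_abs, abs_le]
    exact ⟨le_trans (by linarith) h.1, h.2⟩
  -- bounds on F
  have hF0 : ∀ x, 0 ≤ F x := by
    intro x
    refine integral_nonneg fun ω => (hα₁_mem _ ω).1
  have hFπ : ∀ x, F x ≤ π := by
    intro x
    have := integral_mono (hint x) (integrable_const π) (fun ω => (hα₁_mem _ ω).2)
    simpa using this
  -- F is monotone
  have hFmono : Monotone F := by
    intro x y hxy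
    refine integral_mono_ae (hint x) (hint y) ?_
    filter_upwards [hα₁_mono] with ω hω
    exact hω (by linarith)
  -- the function f
  set f : ℝ → ℝ := fun a => a - F (g - c a) with hf
  have hfmono : StrictMono f := by
    intro a b hab
    have h1 : F (g - c b) ≤ F (g - c a) := hFmono (by linarith [hc_mono hab.le])
    simp only [hf]
    linarith
  have hfcont : Continuous f :=
    continuous_id.sub (hcont.comp (continuous_const.sub hc_cont))
  have hf0 : f 0 ≤ 0 := by simp only [hf]; linarith [hF0 (g - c 0)]
  have hfπ : 0 ≤ f π := by simp only [hf]; linarith [hFπ (g - c π)]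
  obtain ⟨a, ha, hfa⟩ := intermediate_value_Icc hπ.le hfcont.continuousOn ⟨hf0, hfπ⟩
  refine ⟨a, ⟨ha, hfa⟩, ?_⟩
  rintro b ⟨hb, hfb⟩
  exact hfmono.injective (by show b - F (g - c b) = _; rw [hF]; rw [hfb, hfa])
end

section
/- (Lemma 1(iii)) Under the unconditional fixed-point hypotheses, the map ℝ → [0, π], g ↦ α₀(g), where α₀(g) is the unique root in [0, π] of f^g(a) = a − E^Q[α₁(g − c(a) + ε)], is non-decreasing and continuous. -/
open MeasureTheory

open Filter Function Topology

/-- **Lemma 1(iii).** Under the unconditional fixed-point hypotheses, the map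
`g ↦ α₀ g`, where `α₀ g` is the unique root in `[0, π]` of
`f^g a = a − E^Q[α₁ (g − c a + ε)]`, is non-decreasing and continuous. -/
theorem root_monotone_continuous
    {Ω : Type*} [MeasurableSpace Ω] (Q : Measure Ω) [IsProbabilityMeasure Q]
    (π : ℝ) (hπ : 0 < π)
    (c : ℝ → ℝ) (hc_mono : Monotone c) (hc_cont : Continuous c)
    (α₁ : ℝ → Ω → ℝ)
    (hα₁_meas : Measurable (Function.uncurry α₁))
    (hα₁_mem : ∀ g ω, α₁ g ω ∈ Set.Icc 0 π)
    (hα₁_mono : ∀ᵐ ω ∂Q, Monotone fun g => α₁ g ω)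
    (ε : Ω → ℝ) (hε : Measurable ε)
    (hcont : Continuous fun x => ∫ ω, α₁ (x + ε ω) ω ∂Q)
    (α₀ : ℝ → ℝ)
    (hα₀ : ∀ g : ℝ, α₀ g ∈ Set.Icc 0 π ∧
      α₀ g - ∫ ω, α₁ (g - c (α₀ g) + ε ω) ω ∂Q = 0) :
    Monotone α₀ ∧ Continuous α₀ := by
  set F : ℝ → ℝ := fun x => ∫ ω, α₁ (x + ε ω) ω ∂Q with hF
  have hInt : ∀ x : ℝ, Integrable (fun ω => α₁ (x + ε ω) ω) Q := by
    intro x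
    have hm : Measurable fun ω => α₁ (x + ε ω) ω :=
      hα₁_meas.comp ((measurable_const.add hε).prodMk measurable_id)
    refine (integrable_const π).mono' hm.aestronglyMeasurable ?_
    refine Eventually.of_forall fun ω => ?_
    have h := hα₁_mem (x + ε ω) ω
    rw [Real.norm_eq_abs, abs_le]
    constructor <;> linarith [h.1, h.2]
  have hFmono : Monotone F := by
    intro x y hxy
    refine integral_mono_ae (hInt x) (hInt y) ?_
    filter_upwards [hα₁_mono] with ω hω
    exact hω (by linarith)
  have hfix : ∀ g, α₀ g = F (g - c (α₀ g)) := by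
    intro g
    have h := (hα₀ g).2
    simp only [hF]
    linarith
  have hstrict : ∀ g : ℝ, StrictMono (fun a => a - F (g - c a)) := by
    intro g a b hab
    have : F (g - c b) ≤ F (g - c a) := hFmono (by have := hc_mono hab.le; linarith)
    simp only
    linarith
  have hmono : Monotone α₀ := by
    intro g₁ g₂ h
    by_contra hlt
    push_neg at hlt
    have : α₀ g₁ ≤ α₀ g₂ := by
      rw [hfix g₁, hfix g₂]
      exact hFmono (by have := hc_mono hlt.le; linarith)
    linarith
  refine ⟨hmono, continuous_iff_continuousAt.2 fun x => ?_⟩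
  have root_of_lim : ∀ (l : Filter ℝ) [l.NeBot] (L : ℝ), l ≤ 𝓝 x → Tendsto α₀ l (𝓝 L) →
      L = α₀ x := by
    intro l _ L hl hL
    have h1 : Tendsto (fun y => F (y - c (α₀ y))) l (𝓝 (F (x - c L))) :=
      (hcont.tendsto _).comp ((tendsto_id.mono_left hl).sub ((hc_cont.tendsto L).comp hL))
    have h2 : Tendsto α₀ l (𝓝 (F (x - c L))) := by
      refine h1.congr fun y => (hfix y).symm
    have hLe : L = F (x - c L) := tendsto_nhds_unique hL h2
    have hx : α₀ x = F (x - c (α₀ x)) := hfix x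
    have : (fun a => a - F (x - c a)) L = (fun a => a - F (x - c a)) (α₀ x) := by
      simp only
      linarith
    exact (hstrict x).injective this
  rw [hmono.continuousAt_iff_leftLim_eq_rightLim]
  have hLL := root_of_lim (𝓝[<] x) (leftLim α₀ x) nhdsWithin_le_nhds (hmono.tendsto_leftLim x)
  have hRR := root_of_lim (𝓝[>] x) (rightLim α₀ x) nhdsWithin_le_nhds (hmono.tendsto_rightLim x)
  rw [hLL, hRR]
end

section
/- Let (Ω, F, P, (F_t)_{t=0}^{T}) be a filtered probability space, Q ∼ P an equivalent probability measure, and ε a real random variable with P(ε = X) = 0 for every F_{T−1}-measurable random variable X. Let Q_{T−1} be a regular version of the F_{T−1}-conditional distribution of Q. Then for almost every ω ∈ Ω, the map ℝ → [0, 1], x ↦ Q_{T−1}(x + ε ≥ 0)(ω), is continuous. -/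
/-!
If the law of `ε` under a probability measure `ν` has no atoms, its distribution function `F`
is continuous, and so is `x ↦ ν {0 ≤ x + ε} = 1 - F(-x)`; it therefore suffices that for a.e.
`ω` the law of `ε` under `Q_{T-1}(ω)` has no atoms. Every atom of a law on `ℝ` is one of its
quantiles at a rational level `q ∈ (0, 1)`, and the `q`-quantile of the law of `ε` under
`Q_{T-1}(ω)` is an `F_{T-1}`-measurable function `X_q` of `ω`. Disintegrating `Q` along `F_{T-1}`
turns `Q(ε = X_q) = 0` into `Q_{T-1}(ω)(ε = X_q(ω)) = 0` for a.e. `ω`, and there are only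
countably many `q`.
-/

open MeasureTheory ProbabilityTheory Set Filter Topology Function

theorem StieltjesFunction.continuous_of_nullSingletonClass (f : StieltjesFunction ℝ)
    [NullSingletonClass f.measure] : Continuous f := by
  refine continuous_iff_continuousAt.2 fun a => f.mono.continuousAt_iff_leftLim_eq_rightLim.2 ?_
  have hjump : ENNReal.ofReal (f a - leftLim f a) = 0 := by
    rw [← f.measure_singleton]
    exact MeasureTheory.measure_singleton a
  rw [ENNReal.ofReal_eq_zero, sub_nonpos] at hjump
  rw [f.rightLim_eq]
  exact le_antisymm (f.mono.leftLim_le le_rfl) hjump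

namespace ProbabilityTheory

section Cdf

variable {ν : Measure ℝ} [IsProbabilityMeasure ν] [NullSingletonClass ν]

theorem continuous_cdf : Continuous (cdf ν) := by
  have : NullSingletonClass (cdf ν).measure := by rwa [measure_cdf]
  exact (cdf ν).continuous_of_nullSingletonClass

theorem measureReal_Ici_eq_one_sub_cdf (x : ℝ) : ν.real (Ici x) = 1 - cdf ν x := by
  rw [cdf_eq_real, ← compl_Iio, probReal_compl_eq_one_sub measurableSet_Iio,
    measureReal_congr Iio_ae_eq_Iic]

end Cdf

theorem continuous_measure_setOf_nonneg_add_toReal {Ω : Type*} [MeasurableSpace Ω]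
    (ν : Measure Ω) [IsProbabilityMeasure ν] {ε : Ω → ℝ} (hε : Measurable ε)
    [NullSingletonClass (ν.map ε)] :
    Continuous fun x : ℝ => (ν {ω | 0 ≤ x + ε ω}).toReal := by
  have := Measure.isProbabilityMeasure_map (μ := ν) hε.aemeasurable
  have h : ∀ x : ℝ, (ν {ω | 0 ≤ x + ε ω}).toReal = 1 - cdf (ν.map ε) (-x) := by
    intro x
    rw [← measureReal_Ici_eq_one_sub_cdf, measureReal_def,
      Measure.map_apply hε measurableSet_Ici]
    simp only [preimage, mem_Ici, neg_le_iff_add_nonneg, add_comm]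
  simp_rw [h]
  exact continuous_const.sub (continuous_cdf.comp continuous_neg)

/-- Meaningful only for `0 < q < 1`: otherwise the set is empty or unbounded below and `sInf`
returns the junk value `0`. -/
noncomputable def quantile (ν : Measure ℝ) (q : ℝ) : ℝ := sInf {x | q ≤ cdf ν x}

section Quantile

variable (ν : Measure ℝ) {q : ℝ}

theorem bddBelow_setOf_le_cdf (hq : 0 < q) : BddBelow {x | q ≤ cdf ν x} := by
  obtain ⟨b, hb⟩ := ((tendsto_cdf_atBot ν).eventually (gt_mem_nhds hq)).exists_forall_of_atBot
  refine ⟨b, fun x hx => ?_⟩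
  by_contra! hxb
  exact (hb x hxb.le).not_ge hx

theorem nonempty_setOf_le_cdf (hq : q < 1) : {x | q ≤ cdf ν x}.Nonempty :=
  ((tendsto_cdf_atTop ν).eventually (lt_mem_nhds hq)).exists.imp fun _ h => h.le

theorem quantile_lt_iff (hq0 : 0 < q) (hq1 : q < 1) {t : ℝ} :
    quantile ν q < t ↔ ∃ r : ℚ, (r : ℝ) < t ∧ q ≤ cdf ν r := by
  constructor
  · intro h
    obtain ⟨x, hx, hxt⟩ := exists_lt_of_csInf_lt (nonempty_setOf_le_cdf ν hq1) h
    obtain ⟨r, hxr, hrt⟩ := exists_rat_btwn hxt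
    exact ⟨r, hrt, hx.trans (monotone_cdf ν hxr.le)⟩
  · rintro ⟨r, hrt, hr⟩
    exact (csInf_le (bddBelow_setOf_le_cdf ν hq0) hr).trans_lt hrt

theorem exists_quantile_eq_of_measure_singleton_ne_zero [IsProbabilityMeasure ν] {a : ℝ}
    (ha : ν {a} ≠ 0) : ∃ q : ℚ, 0 < (q : ℝ) ∧ (q : ℝ) < 1 ∧ quantile ν q = a := by
  have hjump : leftLim (cdf ν) a < cdf ν a := by
    rwa [← measure_cdf ν, StieltjesFunction.measure_singleton, Ne, ENNReal.ofReal_eq_zero,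
      not_le, sub_pos] at ha
  have hleft_nonneg : 0 ≤ leftLim (cdf ν) a :=
    (cdf_nonneg ν (a - 1)).trans ((monotone_cdf ν).le_leftLim (by linarith))
  obtain ⟨q, hq_left, hq_cdf⟩ := exists_rat_btwn hjump
  have hq0 : 0 < (q : ℝ) := hleft_nonneg.trans_lt hq_left
  have hq1 : (q : ℝ) < 1 := hq_cdf.trans_le (cdf_le_one ν a)
  refine ⟨q, hq0, hq1, le_antisymm (csInf_le (bddBelow_setOf_le_cdf ν hq0) hq_cdf.le) ?_⟩
  refine le_csInf (nonempty_setOf_le_cdf ν hq1) fun x hx => ?_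
  by_contra! hxa
  exact (hx.trans ((monotone_cdf ν).le_leftLim hxa)).not_gt hq_left

theorem measurable_quantile {α : Type*} {mα : MeasurableSpace α} (η : Kernel α ℝ)
    [IsMarkovKernel η] (hq0 : 0 < q) (hq1 : q < 1) : Measurable fun a => quantile (η a) q := by
  refine measurable_of_Iio fun t => ?_
  have hpre : (fun a => quantile (η a) q) ⁻¹' Iio t
      = ⋃ r : {r : ℚ // (r : ℝ) < t}, {a | q ≤ cdf (η a) r} := by
    ext a
    simp [quantile_lt_iff _ hq0 hq1]
  rw [hpre]
  refine MeasurableSet.iUnion fun r => measurableSet_le measurable_const ?_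
  simp_rw [cdf_eq_real]
  exact (η.measurable_coe measurableSet_Iic).ennreal_toReal

end Quantile

section CondExpKernel

variable {Ω : Type*} {m mΩ : MeasurableSpace Ω} [StandardBorelSpace Ω]
  {μ : Measure Ω} [IsFiniteMeasure μ]

theorem ae_condExpKernel_prodMk_preimage_eq_zero (hm : m ≤ mΩ) {S : Set (Ω × Ω)}
    (hS : MeasurableSet[m.prod mΩ] S) (h : μ (Function.diag ⁻¹' S) = 0) :
    ∀ᵐ ω ∂μ, condExpKernel μ m ω (Prod.mk ω ⁻¹' S) = 0 := by
  have hdiag : Measurable[mΩ, m.prod mΩ] (Function.diag : Ω → Ω × Ω) :=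
    (measurable_id'' hm).prodMk measurable_id
  have hint : ∫⁻ ω, condExpKernel μ m ω (Prod.mk ω ⁻¹' S) ∂(μ.trim hm) = 0 := by
    rw [← Measure.compProd_apply hS, compProd_trim_condExpKernel, Measure.map_apply hdiag hS]
    exact h
  exact ae_of_ae_trim hm
    ((lintegral_eq_zero_iff (Kernel.measurable_kernel_prodMk_left hS)).1 hint)

theorem ae_nullSingletonClass_map_condExpKernel (hm : m ≤ mΩ) {ε : Ω → ℝ}
    (hε : Measurable ε)
    (hε_ne : ∀ X : Ω → ℝ, Measurable[m] X → μ {ω | ε ω = X ω} = 0) :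
    ∀ᵐ ω ∂μ, NullSingletonClass ((condExpKernel μ m ω).map ε) := by
  set η := (condExpKernel μ m).map ε
  have : IsMarkovKernel η := Kernel.IsMarkovKernel.map _ hε
  have hquantile : ∀ q : ℚ, ∀ᵐ ω ∂μ, 0 < (q : ℝ) → (q : ℝ) < 1 →
      η ω {quantile (η ω) q} = 0 := by
    intro q
    by_cases hq : 0 < (q : ℝ) ∧ (q : ℝ) < 1
    · have hX : Measurable[m] fun ω => quantile (η ω) q := measurable_quantile η hq.1 hq.2
      have hS : MeasurableSet[m.prod mΩ] {p : Ω × Ω | ε p.2 = quantile (η p.1) q} :=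
        measurableSet_eq_fun (hε.comp measurable_snd) (hX.comp measurable_fst)
      filter_upwards [ae_condExpKernel_prodMk_preimage_eq_zero hm hS (hε_ne _ hX)] with ω hω
      rw [Kernel.map_apply' _ hε _ (measurableSet_singleton _)]
      exact fun _ _ => hω
    · exact Eventually.of_forall fun ω h0 h1 => absurd ⟨h0, h1⟩ hq
  filter_upwards [ae_all_iff.2 hquantile] with ω hω
  refine ⟨fun a => by_contra fun ha => ?_⟩
  rw [← Kernel.map_apply _ hε] at ha
  obtain ⟨q, hq0, hq1, rfl⟩ := exists_quantile_eq_of_measure_singleton_ne_zero _ ha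
  exact ha (hω q hq0 hq1)

end CondExpKernel

end ProbabilityTheory

theorem conditional_distribution_no_atoms_continuous_general
    {Ω : Type*} [m0 : MeasurableSpace Ω] [StandardBorelSpace Ω]
    (P Q : Measure Ω) [IsProbabilityMeasure P] [IsProbabilityMeasure Q]
    (hPQ : P ≪ Q) (hQP : Q ≪ P)
    (ℱ : Filtration ℕ m0) (T : ℕ)
    (ε : Ω → ℝ) (hε : Measurable ε)
    (hnpm : ∀ X : Ω → ℝ, Measurable[ℱ (T - 1)] X → P {ω | ε ω = X ω} = 0) :
    ∀ᵐ ω ∂P, Continuous fun x : ℝ =>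
      ((condExpKernel Q (ℱ (T - 1)) ω) {ω' | 0 ≤ x + ε ω'}).toReal := by
  have hno_atoms := ae_nullSingletonClass_map_condExpKernel (ℱ.le (T - 1)) hε
    fun X hX => hQP (hnpm X hX)
  filter_upwards [hPQ.ae_le hno_atoms] with ω hω
  exact continuous_measure_setOf_nonneg_add_toReal _ hε

/-- Let `(Ω, F, P, (F_t)_{t=0}^T)` be a filtered probability space,
`Q ∼ P` an equivalent probability measure, and `ε` a real random variable with
`P(ε = X) = 0` for every `F_{T−1}`-measurable random variable `X`. Let `Q_{T−1}`
(`= condexpKernel Q (ℱ (T−1))`) be a regular version of the `F_{T−1}`-conditional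
distribution of `Q`. Then for almost every `ω ∈ Ω`, the map
`x ↦ Q_{T−1}(x + ε ≥ 0)(ω)` is continuous on `ℝ`. -/
theorem conditional_distribution_no_atoms_continuous
    {Ω : Type*} [m0 : MeasurableSpace Ω] [StandardBorelSpace Ω]
    (P Q : Measure Ω) [IsProbabilityMeasure P] [IsProbabilityMeasure Q]
    (hPQ : P ≪ Q) (hQP : Q ≪ P)
    (ℱ : Filtration ℕ m0) (T : ℕ) (hT : 0 < T)
    (ε : Ω → ℝ) (hε : Measurable ε)
    (hnpm : ∀ X : Ω → ℝ, Measurable[ℱ (T - 1)] X → P {ω | ε ω = X ω} = 0) :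
    ∀ᵐ ω ∂P, Continuous fun x : ℝ =>
      ((condExpKernel Q (ℱ (T - 1)) ω) {ω' | 0 ≤ x + ε ω'}).toReal :=
  conditional_distribution_no_atoms_continuous_general (m0 := m0) P Q hPQ hQP ℱ T ε hε hnpm
end

section
/- Let (Ω, F, Q, (F_t)_{t=0}^{T}) be a filtered probability space and π > 0. Suppose the martingale increments ε_{t+1} = E_{t+1} − E_t are independent of F_t under Q for all t, the abatement function c : ℝ → ℝ is deterministic, time-constant, non-decreasing and continuous, and the fixed-point functionals α_t : ℝ → [0, π] are deterministic. Define G_0 = E_0 and G_{t+1} = G_t − c(α_t(G_t)) + ε_{t+1}. Then α_t(G_t) is σ(G_t)-measurable and the fixed-point equation holds with F_t replaced by σ(G_t): α_t(G_t) = E^Q[α_{t+1}(G_t − c(α_t(G_t)) + ε_{t+1}) | σ(G_t)] almost surely. -/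
open MeasureTheory ProbabilityTheory

/-- Suppose the martingale increments `ε_{t+1} = E_{t+1} − E_t` are
independent of `F_t` under `Q`, the abatement function `c : ℝ → ℝ` is deterministic,
time-constant, non-decreasing and continuous, and the fixed-point functionals
`α_t : ℝ → [0, π]` are deterministic, with `α_T g = π·1_{[0,∞)} g` and
`α_t g = E^Q[α_{t+1} (g − c (α_t g) + ε_{t+1})]` for `t < T`. Define `G_0 = E_0` and
`G_{t+1} = G_t − c (α_t G_t) + ε_{t+1}`. Then `α_t (G_t)` is `σ(G_t)`-measurable and the
fixed-point equation holds with `F_t` replaced by `σ(G_t)`: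
`α_t (G_t) = E^Q[α_{t+1} (G_t − c (α_t G_t) + ε_{t+1}) | σ(G_t)]` almost surely. -/
theorem fixed_point_sigma_state_process
    {Ω : Type*} [m0 : MeasurableSpace Ω]
    (Q : Measure Ω) [IsProbabilityMeasure Q]
    (ℱ : Filtration ℕ m0) (T : ℕ)
    (π : ℝ) (hπ : 0 < π)
    (E : ℕ → Ω → ℝ)
    (hE_adapted : ∀ t ≤ T, StronglyMeasurable[ℱ t] (E t))
    (hE_int : ∀ t ≤ T, Integrable (E t) Q)
    (hE_mart : ∀ t < T, Q[E (t + 1)|ℱ t] =ᵐ[Q] E t)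
    (hindep : ∀ t < T,
      Indep (MeasurableSpace.comap (fun ω => E (t + 1) ω - E t ω)
        (inferInstance : MeasurableSpace ℝ)) (ℱ t) Q)
    (c : ℝ → ℝ) (hc_mono : Monotone c) (hc_cont : Continuous c)
    (α : ℕ → ℝ → ℝ) (hα_meas : ∀ t, Measurable (α t))
    (hα_mem : ∀ t g, α t g ∈ Set.Icc 0 π)
    (hα_T : ∀ g : ℝ, α T g = if 0 ≤ g then π else 0)
    (hα_fix : ∀ t < T, ∀ g : ℝ,
      α t g = ∫ ω, α (t + 1) (g - c (α t g) + (E (t + 1) ω - E t ω)) ∂Q)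
    (G : ℕ → Ω → ℝ)
    (hG0 : ∀ ω, G 0 ω = E 0 ω)
    (hG : ∀ t ω, G (t + 1) ω = G t ω - c (α t (G t ω)) + (E (t + 1) ω - E t ω)) :
    ∀ t < T,
      Measurable[MeasurableSpace.comap (G t) (inferInstance : MeasurableSpace ℝ)]
        (fun ω => α t (G t ω)) ∧
      (fun ω => α t (G t ω)) =ᵐ[Q]
        Q[fun ω => α (t + 1) (G t ω - c (α t (G t ω)) + (E (t + 1) ω - E t ω))
          | MeasurableSpace.comap (G t) (inferInstance : MeasurableSpace ℝ)] := by
  -- G t is ℱ t-measurable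
  have hGmeas : ∀ t ≤ T, Measurable[ℱ t] (G t) := by
    intro t
    induction t with
    | zero =>
      intro _
      have h0 : G 0 = E 0 := funext hG0
      rw [h0]
      exact (hE_adapted 0 (Nat.zero_le T)).measurable
    | succ n ih =>
      intro h
      have hn : n ≤ T := le_trans (Nat.le_succ n) h
      have hGn : Measurable[ℱ n] (G n) := ih hn
      have hGn' : Measurable[ℱ (n + 1)] (G n) :=
        hGn.mono (ℱ.mono (Nat.le_succ n)) le_rfl
      have hEn1 : Measurable[ℱ (n + 1)] (E (n + 1)) := (hE_adapted (n + 1) h).measurable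
      have hEn : Measurable[ℱ (n + 1)] (E n) :=
        (hE_adapted n hn).measurable.mono (ℱ.mono (Nat.le_succ n)) le_rfl
      have hGs : G (n + 1) = fun ω => G n ω - c (α n (G n ω)) + (E (n + 1) ω - E n ω) :=
        funext (hG n)
      rw [hGs]
      exact (hGn'.sub ((hc_cont.measurable.comp (hα_meas n)).comp hGn')).add (hEn1.sub hEn)
  intro t ht
  have htT : t ≤ T := le_of_lt ht
  have hGt : Measurable[ℱ t] (G t) := hGmeas t htT
  have hGt0 : Measurable (G t) := hGt.mono (ℱ.le t) le_rfl
  have hmG_le_F : (MeasurableSpace.comap (G t) (inferInstance : MeasurableSpace ℝ)) ≤ ℱ t := MeasurableSpace.comap_le_iff_le_map.mpr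
    (fun s hs => hGt hs)
  have hmG_le : (MeasurableSpace.comap (G t) (inferInstance : MeasurableSpace ℝ)) ≤ m0 := le_trans hmG_le_F (ℱ.le t)
  -- measurability of G t w.r.t. (MeasurableSpace.comap (G t) (inferInstance : MeasurableSpace ℝ))
  have hGt_mG : Measurable[(MeasurableSpace.comap (G t) (inferInstance : MeasurableSpace ℝ))] (G t) := Measurable.of_comap_le le_rfl
  have hmeas1 : Measurable[(MeasurableSpace.comap (G t) (inferInstance : MeasurableSpace ℝ))] (fun ω => α t (G t ω)) := (hα_meas t).comp hGt_mG
  refine ⟨hmeas1, ?_⟩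
  -- notation
  set ε : Ω → ℝ := fun ω => E (t + 1) ω - E t ω with hε
  have hεmeas : Measurable[m0] ε :=
    ((hE_adapted (t + 1) ht).measurable.mono (ℱ.le (t + 1)) le_rfl).sub
      ((hE_adapted t htT).measurable.mono (ℱ.le t) le_rfl)
  -- the function inside the conditional expectation
  set f : Ω → ℝ := fun ω => α (t + 1) (G t ω - c (α t (G t ω)) + ε ω) with hf
  have hfmeas : Measurable[m0] f :=
    (hα_meas (t + 1)).comp ((hGt0.sub ((hc_cont.measurable.comp (hα_meas t)).comp hGt0)).add
      hεmeas)
  have habs : ∀ s x, |α s x| ≤ π := by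
    intro s x
    have h := hα_mem s x
    rw [abs_le]
    exact ⟨le_trans (by linarith) h.1, h.2⟩
  have hfint : Integrable f Q := by
    refine Integrable.mono' (integrable_const π) hfmeas.aestronglyMeasurable ?_
    exact Filter.Eventually.of_forall fun ω => habs _ _
  have hgint : Integrable (fun ω => α t (G t ω)) Q := by
    refine Integrable.mono' (integrable_const π)
      ((hα_meas t).comp hGt0).aestronglyMeasurable ?_
    exact Filter.Eventually.of_forall fun ω => habs _ _
  -- independence of G t and ε
  have hIF : IndepFun (G t) ε Q := by
    rw [IndepFun_iff_Indep, Indep_iff]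
    have h := (Indep_iff _ _ _).mp (hindep t ht)
    intro s1 s2 h1 h2
    rw [Set.inter_comm, mul_comm]
    exact h s2 s1 h2 (hmG_le_F s1 h1)
  -- product structure of the joint law
  set μG : Measure ℝ := Q.map (G t) with hμG
  set με : Measure ℝ := Q.map ε with hμε
  haveI : IsProbabilityMeasure μG := Measure.isProbabilityMeasure_map hGt0.aemeasurable
  haveI : IsProbabilityMeasure με := Measure.isProbabilityMeasure_map hεmeas.aemeasurable
  have hpair : Q.map (fun ω => (G t ω, ε ω)) = μG.prod με :=
    (indepFun_iff_map_prod_eq_prod_map_map hGt0.aemeasurable hεmeas.aemeasurable).mp hIF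
  have hpair_meas : Measurable[m0] (fun ω => (G t ω, ε ω)) := hGt0.prodMk hεmeas
  -- apply uniqueness of the conditional expectation
  haveI : SigmaFinite (Q.trim hmG_le) := by
    have : IsFiniteMeasure (Q.trim hmG_le) := isFiniteMeasure_trim hmG_le
    infer_instance
  refine (ae_eq_condExp_of_forall_setIntegral_eq hmG_le hfint
    (fun s _ _ => hgint.integrableOn)
    (fun s hs _ => ?_)
    (StronglyMeasurable.aestronglyMeasurable hmeas1.stronglyMeasurable))
  -- s = G t ⁻¹' B for some measurable B
  obtain ⟨B, hB, rfl⟩ := hs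
  -- the two-variable function
  set F : ℝ × ℝ → ℝ :=
    Set.indicator (B ×ˢ (Set.univ : Set ℝ))
      (fun p => α (t + 1) (p.1 - c (α t p.1) + p.2)) with hF
  have hFmeas : Measurable F := by
    refine Measurable.indicator ?_ (hB.prod MeasurableSet.univ)
    exact (hα_meas (t + 1)).comp
      ((measurable_fst.sub ((hc_cont.measurable.comp (hα_meas t)).comp measurable_fst)).add
        measurable_snd)
  have hFabs : ∀ p, |F p| ≤ π := by
    intro p
    rw [hF]
    by_cases hp : p ∈ B ×ˢ (Set.univ : Set ℝ)
    · rw [Set.indicator_of_mem hp]; exact habs _ _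
    · rw [Set.indicator_of_notMem hp]; simp [le_of_lt hπ]
  have hsmeas : MeasurableSet[m0] (G t ⁻¹' B) := hGt0 hB
  -- RHS: ∫_{G t ∈ B} f = ∫ F (G t ω, ε ω)
  have hR1 : ∫ x in G t ⁻¹' B, f x ∂Q = ∫ ω, F (G t ω, ε ω) ∂Q := by
    rw [← integral_indicator hsmeas]
    congr 1
    funext ω
    by_cases hω : G t ω ∈ B
    · rw [Set.indicator_of_mem (show ω ∈ G t ⁻¹' B from hω), hF,
        Set.indicator_of_mem (Set.mk_mem_prod hω (Set.mem_univ _))]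
    · rw [Set.indicator_of_notMem (show ω ∉ G t ⁻¹' B from hω), hF,
        Set.indicator_of_notMem
          (fun h => hω (Set.mem_prod.mp h).1)]
  have hR2 : ∫ ω, F (G t ω, ε ω) ∂Q = ∫ p, F p ∂(μG.prod με) := by
    rw [← hpair, integral_map hpair_meas.aemeasurable]
    exact hFmeas.aestronglyMeasurable
  have hFint : Integrable F (μG.prod με) := by
    refine Integrable.mono' (integrable_const π) hFmeas.aestronglyMeasurable ?_
    exact Filter.Eventually.of_forall hFabs
  have hinner : ∀ g : ℝ, ∫ e, F (g, e) ∂με = Set.indicator B (α t) g := by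
    intro g
    by_cases hg : g ∈ B
    · have hFg : ∀ e : ℝ, F (g, e) = α (t + 1) (g - c (α t g) + e) := by
        intro e
        rw [hF, Set.indicator_of_mem (by simp [hg])]
      rw [Set.indicator_of_mem hg]
      calc ∫ e, F (g, e) ∂με = ∫ e, α (t + 1) (g - c (α t g) + e) ∂με := by
            simp only [hFg]
        _ = ∫ ω, α (t + 1) (g - c (α t g) + ε ω) ∂Q := by
            rw [hμε, integral_map hεmeas.aemeasurable]
            exact ((hα_meas (t + 1)).comp (measurable_const.add measurable_id)
              ).aestronglyMeasurable
        _ = α t g := (hα_fix t ht g).symm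
    · have hFg : ∀ e : ℝ, F (g, e) = 0 := by
        intro e
        rw [hF, Set.indicator_of_notMem (by simp [hg])]
      rw [Set.indicator_of_notMem hg]
      simp [hFg]
  have hR3 : ∫ p, F p ∂(μG.prod με) = ∫ g, Set.indicator B (α t) g ∂μG := by
    rw [integral_prod _ hFint]
    exact integral_congr_ae (Filter.Eventually.of_forall fun g => hinner g)
  have hR4 : ∫ g, Set.indicator B (α t) g ∂μG = ∫ x in G t ⁻¹' B, α t (G t x) ∂Q := by
    rw [hμG, integral_map hGt0.aemeasurable
      (((hα_meas t).indicator hB).aestronglyMeasurable), ← integral_indicator hsmeas]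
    congr 1
  rw [hR1, hR2, hR3, hR4]
end

section
/- (Proposition 1(a), proved part) In the emissions market model, if (A*_t)_{t=0}^{T} is an equilibrium allowance price process, then allowance trading admits no arbitrage: there exists no adapted process (ν_t)_{t=0}^{T−1} with P(Σ_{t=0}^{T−1} ν_t(A*_{t+1} − A*_t) ≥ 0) = 1 and P(Σ_{t=0}^{T−1} ν_t(A*_{t+1} − A*_t) > 0) > 0. -/
open MeasureTheory ProbabilityTheory
open scoped ENNReal

noncomputable section

/-- Extended (`EReal`-valued) expectation of a real random variable; its value is
meaningful (in `(-∞, +∞]`) whenever the negative part is integrable. -/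
def eexp {Ω : Type*} [MeasurableSpace Ω] (P : Measure Ω) (f : Ω → ℝ) : EReal :=
  ((∫⁻ ω, ENNReal.ofReal (f ω) ∂P : ℝ≥0∞) : EReal) -
    ((∫⁻ ω, ENNReal.ofReal (-f ω) ∂P : ℝ≥0∞) : EReal)

/-- The expectation of `f` exists, with value finite or `+∞`: `f` is a.e.-measurable and
its negative part is integrable. -/
def EexpExists {Ω : Type*} [MeasurableSpace Ω] (P : Measure Ω) (f : Ω → ℝ) : Prop :=
  AEMeasurable f P ∧ ∫⁻ ω, ENNReal.ofReal (-f ω) ∂P < ⊤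

/-- Terminal wealth (revenue) of an agent with cost functions `Cf`, business-as-usual
emissions `Eb` and effective initial allocation `γ`, facing allowance prices `A` and
penalty `π`, following the trading strategy `ϑ` and the abatement strategy `ξ`:
`L^{A}(ϑ, ξ) = −Σ_{t<T} (ϑ_t A_t + C_t(ξ_t)) − ϑ_T A_T
  − π (Σ_{t<T} (E_t − ξ_t − ϑ_t) − γ − ϑ_T)⁺`. -/
def wealth {Ω : Type*} (T : ℕ) (π : ℝ) (Cf : ℕ → ℝ → Ω → ℝ) (Eb : ℕ → Ω → ℝ)
    (γ : Ω → ℝ) (A ϑ ξ : ℕ → Ω → ℝ) (ω : Ω) : ℝ :=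
  -(∑ t ∈ Finset.range T, (ϑ t ω * A t ω + Cf t (ξ t ω) ω)) - ϑ T ω * A T ω -
    π * max (∑ t ∈ Finset.range T, (Eb t ω - ξ t ω - ϑ t ω) - γ ω - ϑ T ω) 0

/-- A policy `(ϑ, ξ)` is admissible: both processes are adapted and the abatement
satisfies `0 ≤ ξ_t ≤ E_t` for `t = 0, …, T−1`. -/
def Admissible {Ω : Type*} [m0 : MeasurableSpace Ω] (ℱ : MeasureTheory.Filtration ℕ m0)
    (T : ℕ) (Eb : ℕ → Ω → ℝ) (ϑ ξ : ℕ → Ω → ℝ) : Prop :=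
  (∀ t ≤ T, StronglyMeasurable[ℱ t] (ϑ t)) ∧
  (∀ t < T, StronglyMeasurable[ℱ t] (ξ t)) ∧
  (∀ t < T, ∀ ω, 0 ≤ ξ t ω ∧ ξ t ω ≤ Eb t ω)

/-- `A` is an equilibrium allowance price process with corresponding equilibrium policies
`(ϑs i, ξs i)`, `i ∈ I`: each `(ϑs i, ξs i)` is admissible with finite equilibrium
expected utility, cumulative position changes are in zero net supply, and each agent's
policy maximizes its expected utility among admissible policies whose expected utility
exists (is finite or `+∞`). -/
def IsEquilibrium {Ω : Type*} [m0 : MeasurableSpace Ω] (P : Measure Ω)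
    (ℱ : MeasureTheory.Filtration ℕ m0) (T : ℕ) (π : ℝ) {I : Type*} [Fintype I]
    (Eb : I → ℕ → Ω → ℝ) (Cf : I → ℕ → ℝ → Ω → ℝ) (γ : I → Ω → ℝ) (U : I → ℝ → ℝ)
    (A : ℕ → Ω → ℝ) (ϑs ξs : I → ℕ → Ω → ℝ) : Prop :=
  (∀ i, Admissible ℱ T (Eb i) (ϑs i) (ξs i)) ∧
  (∀ i, Integrable
    (fun ω => U i (wealth T π (Cf i) (Eb i) (γ i) A (ϑs i) (ξs i) ω)) P) ∧
  (∀ t ≤ T, ∀ ω, ∑ i, ϑs i t ω = 0) ∧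
  (∀ i, ∀ ϑ ξ : ℕ → Ω → ℝ, Admissible ℱ T (Eb i) ϑ ξ →
    EexpExists P (fun ω => U i (wealth T π (Cf i) (Eb i) (γ i) A ϑ ξ ω)) →
    eexp P (fun ω => U i (wealth T π (Cf i) (Eb i) (γ i) A ϑ ξ ω)) ≤
      eexp P (fun ω => U i (wealth T π (Cf i) (Eb i) (γ i) A (ϑs i) (ξs i) ω)))

/-! Suppose `ν` were an arbitrage and let some agent add to its equilibrium trades the purchases
`ν_t − ν_{t−1}` (with `ν_{−1} = ν_T = 0`), i.e. hold `ν_t` allowances over `[t, t + 1)`.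
Its net allowance position at `T`, hence its penalty, is unchanged, and by summation by parts
its wealth increases by the gain `Σ_t ν_t (A_{t+1} − A_t)`. That gain is a.s. nonnegative and
positive with positive probability, so the strictly increasing utility raises the expected utility
strictly (the new expectation exists, possibly `+∞`), contradicting the agent's optimality. -/

section Expectation

variable {Ω : Type*} [MeasurableSpace Ω] {P : Measure Ω} {f g : Ω → ℝ}

lemma Real.enorm_eq_ofReal_add_ofReal_neg (x : ℝ) :
    ‖x‖ₑ = ENNReal.ofReal x + ENNReal.ofReal (-x) := by
  rcases le_total 0 x with hx | hx
  · rw [Real.enorm_of_nonneg hx, ENNReal.ofReal_of_nonpos (neg_nonpos.2 hx), add_zero]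
  · rw [Real.enorm_eq_ofReal_abs, abs_of_nonpos hx, ENNReal.ofReal_of_nonpos hx, zero_add]

lemma MeasureTheory.Integrable.lintegral_ofReal_lt_top (hf : Integrable f P) :
    ∫⁻ ω, ENNReal.ofReal (f ω) ∂P < ∞ :=
  (lintegral_mono fun ω => by rw [Real.enorm_eq_ofReal_add_ofReal_neg]; exact le_self_add).trans_lt
    hf.2

lemma eexp_eq_integral (hf : Integrable f P) : eexp P f = ∫ ω, f ω ∂P := by
  rw [eexp, integral_eq_lintegral_pos_part_sub_lintegral_neg_part hf, EReal.coe_sub,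
    EReal.coe_ennreal_toReal hf.lintegral_ofReal_lt_top.ne,
    EReal.coe_ennreal_toReal hf.fun_neg.lintegral_ofReal_lt_top.ne]

lemma eexp_eq_top (hpos : ∫⁻ ω, ENNReal.ofReal (g ω) ∂P = ∞)
    (hneg : ∫⁻ ω, ENNReal.ofReal (-g ω) ∂P < ∞) : eexp P g = ⊤ := by
  rw [eexp, hpos, ← EReal.coe_ennreal_toReal hneg.ne, EReal.coe_ennreal_top, EReal.top_sub_coe]

lemma integrable_of_lintegral_ofReal_lt_top (hg : AEMeasurable g P)
    (hpos : ∫⁻ ω, ENNReal.ofReal (g ω) ∂P < ∞) (hneg : ∫⁻ ω, ENNReal.ofReal (-g ω) ∂P < ∞) :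
    Integrable g P := by
  refine ⟨hg.aestronglyMeasurable, ?_⟩
  rw [HasFiniteIntegral]
  simp_rw [Real.enorm_eq_ofReal_add_ofReal_neg]
  rw [lintegral_add_left' hg.ennreal_ofReal]
  exact ENNReal.add_lt_top.2 ⟨hpos, hneg⟩

lemma EexpExists.of_ae_le (hf : Integrable f P) (hg : AEMeasurable g P) (hfg : f ≤ᵐ[P] g) :
    EexpExists P g := by
  refine ⟨hg, (lintegral_mono_ae ?_).trans_lt hf.fun_neg.lintegral_ofReal_lt_top⟩
  filter_upwards [hfg] with ω hω
  exact ENNReal.ofReal_le_ofReal (neg_le_neg hω)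

lemma eexp_lt_eexp (hf : Integrable f P) (hg : EexpExists P g) (hfg : f ≤ᵐ[P] g)
    (hlt : 0 < P {ω | f ω < g ω}) : eexp P f < eexp P g := by
  rw [eexp_eq_integral hf]
  by_cases htop : ∫⁻ ω, ENNReal.ofReal (g ω) ∂P = ∞
  · rw [eexp_eq_top htop hg.2]
    exact EReal.coe_lt_top _
  have hgi := integrable_of_lintegral_ofReal_lt_top hg.1 (lt_top_iff_ne_top.2 htop) hg.2
  rw [eexp_eq_integral hgi, EReal.coe_lt_coe_iff, ← sub_pos, ← integral_sub hgi hf,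
    integral_pos_iff_support_of_nonneg_ae (hfg.mono fun _ => sub_nonneg.2) (hgi.sub hf)]
  exact hlt.trans_le (measure_mono fun ω hω => (sub_pos.2 hω).ne')

lemma aemeasurable_of_strictMono_comp {U : ℝ → ℝ} (hU : StrictMono U)
    (h : AEMeasurable (fun ω => U (f ω)) P) : AEMeasurable f P := by
  refine NullMeasurable.aemeasurable (measurable_of_Ioi fun x => ?_)
  have hpre : f ⁻¹' Set.Ioi x = (fun ω => U (f ω)) ⁻¹' Set.Ioi (U x) := by
    ext ω
    simp [hU.lt_iff_lt]
  change NullMeasurableSet (f ⁻¹' Set.Ioi x) P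
  rw [hpre]
  exact h.nullMeasurable measurableSet_Ioi

lemma StrictMono.eexpExists_and_eexp_lt_comp_add {U : ℝ → ℝ} (hU : StrictMono U) {w G : Ω → ℝ}
    (hw : Integrable (fun ω => U (w ω)) P) (hG : AEMeasurable G P) (hG_nonneg : 0 ≤ᵐ[P] G)
    (hG_pos : 0 < P {ω | 0 < G ω}) :
    EexpExists P (fun ω => U (w ω + G ω)) ∧
      eexp P (fun ω => U (w ω)) < eexp P (fun ω => U (w ω + G ω)) := by
  have hle : (fun ω => U (w ω)) ≤ᵐ[P] fun ω => U (w ω + G ω) :=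
    hG_nonneg.mono fun ω hω => hU.monotone (le_add_of_nonneg_right hω)
  have hmeas : AEMeasurable (fun ω => U (w ω + G ω)) P :=
    hU.monotone.measurable.comp_aemeasurable
      ((aemeasurable_of_strictMono_comp hU hw.aemeasurable).add hG)
  have hexists := EexpExists.of_ae_le hw hmeas hle
  refine ⟨hexists, eexp_lt_eexp hw hexists hle (hG_pos.trans_le (measure_mono ?_))⟩
  exact fun ω hω => hU (lt_add_of_pos_right _ hω)

end Expectation

section Trading

variable {Ω : Type*}

/-- The purchases that realise the holding `h t` over `[t, t + 1)`, starting from no holding. -/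
def holdingIncrement (h : ℕ → ℝ) : ℕ → ℝ
  | 0 => h 0
  | t + 1 => h (t + 1) - h t

lemma sum_range_succ_holdingIncrement (h : ℕ → ℝ) (n : ℕ) :
    ∑ t ∈ Finset.range (n + 1), holdingIncrement h t = h n := by
  induction n with
  | zero => simp [holdingIncrement]
  | succ n ih => rw [Finset.sum_range_succ, ih, holdingIncrement]; ring

lemma sum_range_succ_holdingIncrement_mul (h a : ℕ → ℝ) (n : ℕ) :
    ∑ t ∈ Finset.range (n + 1), holdingIncrement h t * a t =
      h n * a n - ∑ t ∈ Finset.range n, h t * (a (t + 1) - a t) := by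
  induction n with
  | zero => simp [holdingIncrement]
  | succ n ih => rw [Finset.sum_range_succ, ih, Finset.sum_range_succ, holdingIncrement]; ring

lemma wealth_add_holdingIncrement (T : ℕ) (π : ℝ) (Cf : ℕ → ℝ → Ω → ℝ)
    (Eb : ℕ → Ω → ℝ) (γ : Ω → ℝ) (A ϑ ξ h : ℕ → Ω → ℝ) (ω : Ω) (hT : h T ω = 0) :
    wealth T π Cf Eb γ A (fun t ω => ϑ t ω + holdingIncrement (h · ω) t) ξ ω =
      wealth T π Cf Eb γ A ϑ ξ ω + ∑ t ∈ Finset.range T, h t ω * (A (t + 1) ω - A t ω) := by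
  have hsum := sum_range_succ_holdingIncrement (h · ω) T
  have hsum_mul := sum_range_succ_holdingIncrement_mul (h · ω) (A · ω) T
  rw [Finset.sum_range_succ] at hsum hsum_mul
  simp only [hT, zero_mul, zero_sub] at hsum hsum_mul
  have hpenalty : ∑ t ∈ Finset.range T, (Eb t ω - ξ t ω - (ϑ t ω + holdingIncrement (h · ω) t))
      - γ ω - (ϑ T ω + holdingIncrement (h · ω) T) =
      ∑ t ∈ Finset.range T, (Eb t ω - ξ t ω - ϑ t ω) - γ ω - ϑ T ω := by
    simp only [sub_add_eq_sub_sub, Finset.sum_sub_distrib] at hsum ⊢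
    linarith
  simp only [wealth, hpenalty, add_mul, Finset.sum_add_distrib]
  linarith

variable [m0 : MeasurableSpace Ω] {ℱ : Filtration ℕ m0}

lemma stronglyAdapted_holdingIncrement {h : ℕ → Ω → ℝ} (hh : StronglyAdapted ℱ h) :
    StronglyAdapted ℱ fun t ω => holdingIncrement (h · ω) t
  | 0 => hh 0
  | t + 1 => (hh (t + 1)).sub ((hh t).mono (ℱ.mono t.le_succ))

lemma Admissible.add_holdingIncrement {T : ℕ} {Eb ϑ ξ h : ℕ → Ω → ℝ}
    (hadm : Admissible ℱ T Eb ϑ ξ) (hh : StronglyAdapted ℱ h) :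
    Admissible ℱ T Eb (fun t ω => ϑ t ω + holdingIncrement (h · ω) t) ξ :=
  ⟨fun t ht => (hadm.1 t ht).add (stronglyAdapted_holdingIncrement hh t), hadm.2⟩

end Trading

theorem equilibrium_no_arbitrage_general
    {Ω : Type*} [m0 : MeasurableSpace Ω]
    (P : Measure Ω) [IsProbabilityMeasure P]
    (ℱ : MeasureTheory.Filtration ℕ m0)
    (T : ℕ)
    {I : Type*} [Fintype I] [Nonempty I]
    (Eb : I → ℕ → Ω → ℝ)
    (Cf : I → ℕ → ℝ → Ω → ℝ)
    (γ : I → Ω → ℝ)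
    (π : ℝ)
    (U : I → ℝ → ℝ)
    (hU_mono : ∀ i, StrictMono (U i))
    (A : ℕ → Ω → ℝ)
    (hA_adapted : ∀ t ≤ T, StronglyMeasurable[ℱ t] (A t))
    (ϑs ξs : I → ℕ → Ω → ℝ)
    (heq : IsEquilibrium P ℱ T π Eb Cf γ U A ϑs ξs) :
    ¬ ∃ ν : ℕ → Ω → ℝ,
      (∀ t < T, StronglyMeasurable[ℱ t] (ν t)) ∧
      P {ω | 0 ≤ ∑ t ∈ Finset.range T, ν t ω * (A (t + 1) ω - A t ω)} = 1 ∧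
      0 < P {ω | 0 < ∑ t ∈ Finset.range T, ν t ω * (A (t + 1) ω - A t ω)} := by
  rintro ⟨ν, hν, hgain_nonneg, hgain_pos⟩
  obtain ⟨hadm, hint, -, hopt⟩ := heq
  obtain ⟨i⟩ := ‹Nonempty I›
  set gain : Ω → ℝ := fun ω => ∑ t ∈ Finset.range T, ν t ω * (A (t + 1) ω - A t ω)
  set h : ℕ → Ω → ℝ := fun t ω => if t < T then ν t ω else 0
  have h_adapted : StronglyAdapted ℱ h := fun t => by
    by_cases ht : t < T
    · simpa only [h, if_pos ht] using hν t ht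
    · simpa only [h, if_neg ht] using stronglyMeasurable_const
  have hwealth (ω : Ω) :
      wealth T π (Cf i) (Eb i) (γ i) A (fun t ω => ϑs i t ω + holdingIncrement (h · ω) t)
        (ξs i) ω = wealth T π (Cf i) (Eb i) (γ i) A (ϑs i) (ξs i) ω + gain ω := by
    rw [wealth_add_holdingIncrement _ _ _ _ _ _ _ _ _ _ (if_neg (lt_irrefl T))]
    exact congrArg _ (Finset.sum_congr rfl fun t ht => by simp [h, Finset.mem_range.1 ht])
  have hgain_meas : Measurable gain := Finset.measurable_sum _ fun t ht =>
    have ht : t < T := Finset.mem_range.1 ht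
    ((hν t ht).mono (ℱ.le t)).measurable.mul
      (((hA_adapted (t + 1) ht).mono (ℱ.le _)).measurable.sub
        ((hA_adapted t ht.le).mono (ℱ.le t)).measurable)
  have hgain_ae : ∀ᵐ ω ∂P, 0 ≤ gain ω := by
    rwa [ae_iff_measure_eq (measurableSet_le measurable_const hgain_meas).nullMeasurableSet,
      measure_univ]
  obtain ⟨hexists, hlt⟩ :=
    (hU_mono i).eexpExists_and_eexp_lt_comp_add (hint i) hgain_meas.aemeasurable hgain_ae hgain_pos
  simp only [← hwealth] at hexists hlt
  exact (hopt i _ _ ((hadm i).add_holdingIncrement h_adapted) hexists).not_gt hlt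

/-- **Proposition 1(a), proved part.** In the emissions market model, if
`(A*_t)_{t=0}^T` is an equilibrium allowance price process, then allowance trading admits
no arbitrage: there is no adapted process `(ν_t)_{t=0}^{T−1}` with
`P(Σ_{t<T} ν_t (A*_{t+1} − A*_t) ≥ 0) = 1` and `P(Σ_{t<T} ν_t (A*_{t+1} − A*_t) > 0) > 0`. -/
theorem equilibrium_no_arbitrage
    {Ω : Type*} [m0 : MeasurableSpace Ω]
    (P : Measure Ω) [IsProbabilityMeasure P]
    (ℱ : MeasureTheory.Filtration ℕ m0)
    (hF0 : ∀ s : Set Ω, MeasurableSet[ℱ 0] s → P s = 0 ∨ P s = 1)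
    (T : ℕ) (hT : 0 < T)
    {I : Type*} [Fintype I] [Nonempty I]
    (Eb : I → ℕ → Ω → ℝ)
    (hEb_adapted : ∀ i, ∀ t < T, StronglyMeasurable[ℱ t] (Eb i t))
    (hEb_nonneg : ∀ i t ω, 0 ≤ Eb i t ω)
    (Cf : I → ℕ → ℝ → Ω → ℝ)
    (hC_meas : ∀ i, ∀ t < T,
      Measurable[(inferInstance : MeasurableSpace ℝ).prod (ℱ t)]
        (Function.uncurry (Cf i t)))
    (hC_conv : ∀ i ω, ∀ t < T, StrictConvexOn ℝ (Set.Ici 0) fun x => Cf i t x ω)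
    (hC_cont : ∀ i ω, ∀ t < T, ContinuousOn (fun x => Cf i t x ω) (Set.Ici 0))
    (hC_zero : ∀ i ω, ∀ t < T, Cf i t 0 ω = 0)
    (γ : I → Ω → ℝ) (hγ : ∀ i, Measurable (γ i))
    (π : ℝ) (hπ : 0 < π)
    (U : I → ℝ → ℝ)
    (hU_cont : ∀ i, Continuous (U i))
    (hU_mono : ∀ i, StrictMono (U i))
    (hU_conc : ∀ i, ConcaveOn ℝ Set.univ (U i))
    (A : ℕ → Ω → ℝ)
    (hA_adapted : ∀ t ≤ T, StronglyMeasurable[ℱ t] (A t))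
    (ϑs ξs : I → ℕ → Ω → ℝ)
    (heq : IsEquilibrium P ℱ T π Eb Cf γ U A ϑs ξs) :
    ¬ ∃ ν : ℕ → Ω → ℝ,
      (∀ t < T, StronglyMeasurable[ℱ t] (ν t)) ∧
      P {ω | 0 ≤ ∑ t ∈ Finset.range T, ν t ω * (A (t + 1) ω - A t ω)} = 1 ∧
      0 < P {ω | 0 < ∑ t ∈ Finset.range T, ν t ω * (A (t + 1) ω - A t ω)} :=
  equilibrium_no_arbitrage_general (m0 := m0) P ℱ T Eb Cf γ π U hU_mono A hA_adapted ϑs ξs heq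
end
end
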